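/- arXiv:2512.13212 — 4 statements merged into one kernel-verified Lean document; each statement's English description precedes it below -/
import Mathlib

section
/- Free groups are residually solvable: for every element g ≠ 1 of a free group F, there exists a solvable group S and a surjective homomorphism φ : F → S with φ(g) ≠ 1. -/
/-!
If some letter `x` occurring in `g` has nonzero exponent sum in `g`, the exponent-sum map
`F → ℤ` of `x` already detects `g`. Otherwise `g` lies in its kernel and can be rewritten as a
word in the conjugates `xⁱ y x⁻ⁱ` (`y ≠ x`) which is shorter, since every `x` has been absorbed.
By induction on length that word survives in a solvable group `S`, and sending `x` to the
generator of `ℤ` and each `y` into the base of the wreath product `S ≀ ℤ` turns conjugation by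
`xⁱ` into a shift, so `g` survives in `S ≀ ℤ`, which is solvable as an extension of `ℤ` by `S^ℤ`.
-/

instance Pi.isSolvable {I S : Type*} [Group S] [Group.IsSolvable S] : Group.IsSolvable (I → S) := by
  obtain ⟨n, hn⟩ := ‹Group.IsSolvable S›.solvable
  refine ⟨n, (Subgroup.eq_bot_iff_forall _).2 fun f hf => funext fun i => ?_⟩
  have := map_derivedSeries_le_derivedSeries (Pi.evalMonoidHom (fun _ : I => S) i) n ⟨f, hf, rfl⟩
  simpa [hn] using this

namespace RegularWreathProduct

variable {D Q : Type*} [Group D] [Group Q]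

def base : (Q → D) →* D ≀ᵣ Q where
  toFun f := ⟨f, 1⟩
  map_one' := rfl
  map_mul' f g := by ext <;> simp [mul_def]

theorem base_injective : Function.Injective (base : (Q → D) →* D ≀ᵣ Q) :=
  fun _ _ h => congrArg left h

theorem ker_rightHom_le_range_base : (rightHom : D ≀ᵣ Q →* Q).ker ≤ base.range :=
  fun w hw => ⟨w.left, RegularWreathProduct.ext rfl hw.symm⟩

instance [Group.IsSolvable D] [Group.IsSolvable Q] : Group.IsSolvable (D ≀ᵣ Q) :=
  Group.isSolvable_of_ker_le_range base rightHom ker_rightHom_le_range_base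

theorem inl_mul_base_mul_inv_inl (q : Q) (f : Q → D) :
    inl q * base f * (inl q)⁻¹ = base fun r => f (q⁻¹ * r) := by
  ext <;> simp [mul_def, base, inl, inv_left, inv_right]

end RegularWreathProduct

namespace FreeGroup

variable {α : Type*}

def conjugatesLift (x : α) : FreeGroup ({ y // y ≠ x } × ℤ) →* FreeGroup α :=
  lift fun p => of x ^ p.2 * of p.1.1 * (of x ^ p.2)⁻¹

@[simp]
theorem conjugatesLift_of (x : α) (p : { y // y ≠ x } × ℤ) :
    conjugatesLift x (of p) = of x ^ p.2 * of p.1.1 * (of x ^ p.2)⁻¹ :=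
  lift_apply_of

theorem mk_append_singleton (L : List (α × Bool)) (y : α) (b : Bool) :
    mk (L ++ [(y, b)]) = mk L * of y ^ (if b then 1 else -1 : ℤ) := by
  rw [← mul_mk]
  cases b <;> simp [of, inv_mk, invRev]

section DecidableEq

variable [DecidableEq α]

def exponentSum (x : α) : FreeGroup α →* Multiplicative ℤ :=
  lift (Pi.mulSingle x (.ofAdd 1))

@[simp]
theorem exponentSum_of_self (x : α) : exponentSum x (of x) = .ofAdd 1 := by
  simp [exponentSum]

@[simp]
theorem exponentSum_of_of_ne {x y : α} (h : y ≠ x) : exponentSum x (of y) = 1 := by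
  simp [exponentSum, h]

theorem exists_conjugatesLift_eq (x : α) (L : List (α × Bool)) :
    ∃ L' : List (({ y // y ≠ x } × ℤ) × Bool), L'.length = L.countP (·.1 ≠ x) ∧
      conjugatesLift x (mk L') = mk L * (of x ^ (exponentSum x (mk L)).toAdd)⁻¹ := by
  induction L using List.reverseRecOn with
  | nil => exact ⟨[], rfl, by simp [← one_eq_mk]⟩
  | append_singleton L p ih =>
    obtain ⟨L', hlen, hL'⟩ := ih
    obtain ⟨y, b⟩ := p
    set s := (exponentSum x (mk L)).toAdd
    by_cases hy : y = x
    · subst hy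
      refine ⟨L', by simpa using hlen, ?_⟩
      simp only [hL', mk_append_singleton, _root_.map_mul, map_zpow, exponentSum_of_self,
        toAdd_mul, toAdd_zpow, toAdd_ofAdd, zpow_add, smul_eq_mul, mul_one, s]
      group
    · refine ⟨L' ++ [((⟨y, hy⟩, s), b)], by simpa [hy] using hlen, ?_⟩
      simp only [mk_append_singleton, _root_.map_mul, hL', map_zpow, exponentSum_of_of_ne hy,
        one_zpow, mul_one, conjugatesLift_of, conj_zpow, s]
      group

end DecidableEq

open RegularWreathProduct in
theorem exists_ker_comp_conjugatesLift_le {S : Type*} [Group S] (x : α)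
    (ψ : FreeGroup ({ y // y ≠ x } × ℤ) →* S) :
    ∃ Φ : FreeGroup α →* S ≀ᵣ Multiplicative ℤ, (Φ.comp (conjugatesLift x)).ker ≤ ψ.ker := by
  classical
  let Φ : FreeGroup α →* S ≀ᵣ Multiplicative ℤ := lift fun y =>
    if h : y = x then inl (.ofAdd 1) else base fun q => ψ (of (⟨y, h⟩, -q.toAdd))
  let Ψ : FreeGroup ({ y // y ≠ x } × ℤ) →* (Multiplicative ℤ → S) :=
    lift fun p q => ψ (of (p.1, p.2 - q.toAdd))
  refine ⟨Φ, ?_⟩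
  have hΦ : Φ.comp (conjugatesLift x) = base.comp Ψ := by
    refine ext_hom _ _ fun ⟨⟨y, hy⟩, i⟩ => ?_
    have hΦx : Φ (of x) ^ i = inl (.ofAdd i) := by
      simp only [Φ, lift_apply_of, dif_pos, ← map_zpow, ← ofAdd_zsmul, smul_eq_mul, mul_one]
    have hΦy : Φ (of y) = base fun q => ψ (of (⟨y, hy⟩, -q.toAdd)) := by
      simp only [Φ, lift_apply_of, dif_neg hy]
    rw [MonoidHom.comp_apply, conjugatesLift_of, _root_.map_mul, _root_.map_mul, _root_.map_inv,
      map_zpow, hΦx, hΦy, inl_mul_base_mul_inv_inl]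
    simp [Ψ, sub_eq_add_neg, add_comm]
  have hΨ : (Pi.evalMonoidHom _ 1).comp Ψ = ψ := ext_hom _ _ fun p => by simp [Ψ]
  intro g hg
  rw [MonoidHom.mem_ker, hΦ, MonoidHom.comp_apply, map_eq_one_iff _ base_injective] at hg
  rw [MonoidHom.mem_ker, ← hΨ, MonoidHom.comp_apply, hg, _root_.map_one]

theorem exists_solvable_map_mk_ne_one {α : Type} (L : List (α × Bool)) (hL : mk L ≠ 1) :
    ∃ (S : Type) (_ : Group S), Group.IsSolvable S ∧ ∃ φ : FreeGroup α →* S, φ (mk L) ≠ 1 := by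
  classical
  induction hn : L.length using Nat.strong_induction_on generalizing α L with
  | _ n ih =>
  obtain _ | ⟨⟨x, b⟩, L₀⟩ := L
  · exact absurd one_eq_mk.symm hL
  by_cases hx : exponentSum x (mk ((x, b) :: L₀)) = 1
  · obtain ⟨L', hlen, hL'⟩ := exists_conjugatesLift_eq x ((x, b) :: L₀)
    rw [hx, toAdd_one, zpow_zero, inv_one, mul_one] at hL'
    have hlt : L'.length < n := by
      simpa [← hn, hlen, List.countP_cons] using Nat.lt_succ_of_le List.countP_le_length
    obtain ⟨S, _, _, ψ, hψ⟩ := ih _ hlt L' (fun h => hL (by rw [← hL', h, _root_.map_one])) rfl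
    obtain ⟨Φ, hΦ⟩ := exists_ker_comp_conjugatesLift_le x ψ
    exact ⟨_, _, inferInstance, Φ, fun h => hψ (hΦ (by simpa [MonoidHom.mem_ker, hL'] using h))⟩
  · exact ⟨Multiplicative ℤ, _, inferInstance, exponentSum x, hx⟩

end FreeGroup

theorem freeGroup_residually_solvable (α : Type) (g : FreeGroup α) (hg : g ≠ 1) :
    ∃ (S : Type) (instS : Group S), IsSolvable S ∧
      ∃ φ : FreeGroup α →* S, Function.Surjective φ ∧ φ g ≠ 1 := by
  classical
  obtain ⟨S, _, _, φ, hφ⟩ :=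
    FreeGroup.exists_solvable_map_mk_ne_one g.toWord (by rwa [g.mk_toWord])
  rw [g.mk_toWord] at hφ
  exact ⟨φ.range, inferInstance, (inferInstance : Group.IsSolvable φ.range), φ.rangeRestrict,
    φ.rangeRestrict_surjective, fun h => hφ (by simpa using congrArg Subtype.val h)⟩
end

section
/- Let Γ be an infinite group acting on Alt(Γ) (the even finitary permutations of Γ) by conjugation with left translations. Suppose φ : Alt(Γ) ⋊ Γ → Λ is a group homomorphism that is injective on Alt(Γ) (viewed inside the semidirect product). If φ(σ, g) = 1 for some (σ, g), then σ = id and g = 1; that is, φ is injective on all of Alt(Γ) ⋊ Γ. -/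
open scoped Classical

/-- The set of 3-cycles of a type `X`, written as products of two transpositions. -/
def threeCycles (X : Type) : Set (Equiv.Perm X) :=
  {σ | ∃ a b c : X, a ≠ b ∧ a ≠ c ∧ b ≠ c ∧ σ = Equiv.swap a b * Equiv.swap a c}

/-- `Alt(X)`: the group of even finitary permutations of `X`, realized as the
subgroup of `Equiv.Perm X` generated by all 3-cycles. -/
def altGroup (X : Type) : Subgroup (Equiv.Perm X) :=
  Subgroup.closure (threeCycles X)

lemma conj_threeCycles {X : Type} (π : Equiv.Perm X) :
    (MulAut.conj π).toMonoidHom '' threeCycles X ⊆ threeCycles X := by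
  rintro _ ⟨σ, ⟨a, b, c, hab, hac, hbc, rfl⟩, rfl⟩
  refine ⟨π a, π b, π c, π.injective.ne hab, π.injective.ne hac, π.injective.ne hbc, ?_⟩
  simp only [MulEquiv.coe_toMonoidHom, MulAut.conj_apply]
  rw [Equiv.swap_apply_apply π a b, Equiv.swap_apply_apply π a c]
  group

lemma altGroup_map_conj_le {X : Type} (π : Equiv.Perm X) :
    (altGroup X).map (MulAut.conj π).toMonoidHom ≤ altGroup X := by
  rw [altGroup, MonoidHom.map_closure]
  exact Subgroup.closure_mono (conj_threeCycles π)

lemma altGroup_map_conj {X : Type} (π : Equiv.Perm X) :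
    (altGroup X).map (MulAut.conj π).toMonoidHom = altGroup X := by
  refine le_antisymm (altGroup_map_conj_le π) fun σ hσ => ?_
  refine ⟨(MulAut.conj π)⁻¹ σ, ?_, by simp; group⟩
  exact altGroup_map_conj_le π⁻¹ ⟨σ, hσ, by simp⟩

/-- Conjugation of `Alt(Γ)` by the left translation `x ↦ g x`. -/
def altConjAut (Γ : Type) [Group Γ] (g : Γ) : MulAut (altGroup Γ) :=
  ((MulAut.conj (Equiv.mulLeft g : Equiv.Perm Γ)).subgroupMap (altGroup Γ)).trans
    (MulEquiv.subgroupCongr (altGroup_map_conj _))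

/-- The action of `Γ` on `Alt(Γ)` given by `(g·σ)(x) = g σ (g⁻¹ x)`. -/
def altAction (Γ : Type) [Group Γ] : Γ →* MulAut (altGroup Γ) :=
  MonoidHom.mk' (fun g => altConjAut Γ g) (by
    intro g h
    refine MulEquiv.ext fun σ => Subtype.ext ?_
    show MulAut.conj (Equiv.mulLeft (g * h)) (σ : Equiv.Perm Γ) =
      MulAut.conj (Equiv.mulLeft g) (MulAut.conj (Equiv.mulLeft h) (σ : Equiv.Perm Γ))
    rw [Equiv.mulLeft_mul, map_mul]
    rfl)

/-!
If `f (σ, g) = 1`, conjugation by `(σ, g)` becomes trivial on `Alt(Γ)` after applying `f`, and `f`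
is injective there, so the permutation `σ ∘ (g * ·)` of `Γ` commutes with every 3-cycle. On an
infinite set only the identity does, hence left translation by `g` is `σ⁻¹` and has finite support.
A translation by `g ≠ 1` moves every point of the infinite set `Γ`, so `g = 1`, and then `σ = 1`.
-/

open Equiv MulAction

namespace SemidirectProduct

variable {N G H : Type*} [Group N] [Group G] [Group H] {φ : G →* MulAut N}

theorem conj_inl (x : N ⋊[φ] G) (n : N) :
    x * inl n * x⁻¹ = inl (x.left * φ x.right n * x.left⁻¹) := by
  ext <;> simp [mul_assoc]

theorem conj_eq_self_of_map_eq_one (f : N ⋊[φ] G →* H) (hinj : Function.Injective (f.comp inl))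
    {x : N ⋊[φ] G} (hx : f x = 1) (n : N) : x.left * φ x.right n * x.left⁻¹ = n :=
  hinj <| by
    rw [MonoidHom.comp_apply, MonoidHom.comp_apply, ← conj_inl, map_mul, map_mul, map_inv, hx,
      one_mul, inv_one, mul_one]

end SemidirectProduct

theorem finite_compl_fixedBy_of_mem_altGroup {X : Type} {σ : Perm X} (hσ : σ ∈ altGroup X) :
    (fixedBy X σ)ᶜ.Finite := by
  refine finite_compl_fixedBy_closure_iff.mpr ?_ σ hσ
  rintro _ ⟨a, b, c, -, -, -, rfl⟩
  refine ((finite_compl_fixedBy_swap (x := a) (y := b)).union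
    (finite_compl_fixedBy_swap (x := a) (y := c))).subset ?_
  simp_rw [← Set.compl_inter, Set.compl_subset_compl, fixedBy_mul]

theorem eq_one_of_mulLeft_mem_altGroup {Γ : Type} [Group Γ] [Infinite Γ] {g : Γ}
    (h : Equiv.mulLeft g ∈ altGroup Γ) : g = 1 := by
  by_contra hg
  have hmoved : (fixedBy Γ (Equiv.mulLeft g))ᶜ = Set.univ := by
    ext x
    simp [Perm.smul_def, hg]
  exact Set.infinite_univ (hmoved ▸ finite_compl_fixedBy_of_mem_altGroup h)

theorem eq_one_of_forall_commute_threeCycles {X : Type} [Infinite X] {π : Perm X}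
    (h : ∀ τ ∈ threeCycles X, Commute π τ) : π = 1 := by
  ext a
  by_contra ha
  rw [Perm.one_apply] at ha
  obtain ⟨b, hb⟩ := Infinite.exists_notMem_finset ({a, π a} : Finset X)
  obtain ⟨c, hc⟩ := Infinite.exists_notMem_finset ({a, π a, b} : Finset X)
  simp only [Finset.mem_insert, Finset.mem_singleton, not_or] at hb hc
  have hτ := congrArg (· a) (h _ ⟨a, b, c, Ne.symm hb.1, Ne.symm hc.1, Ne.symm hc.2.2, rfl⟩).eq
  simp only [Perm.mul_apply, swap_apply_left, swap_apply_of_ne_of_ne hc.1 hc.2.2,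
    swap_apply_of_ne_of_ne ha (Ne.symm hc.2.1), swap_apply_of_ne_of_ne ha (Ne.symm hb.2)] at hτ
  exact hc.1 (π.injective hτ)

theorem mulLeft_eq_inv_of_forall_conj_altAction_eq {Γ : Type} [Group Γ] [Infinite Γ]
    {σ : altGroup Γ} {g : Γ} (h : ∀ τ, σ * altAction Γ g τ * σ⁻¹ = τ) :
    Equiv.mulLeft g = (σ : Perm Γ)⁻¹ := by
  refine eq_inv_of_mul_eq_one_right (eq_one_of_forall_commute_threeCycles fun τ hτ => ?_)
  have hconj := congrArg Subtype.val (h ⟨τ, Subgroup.subset_closure hτ⟩)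
  change (σ : Perm Γ) * (Equiv.mulLeft g * τ * (Equiv.mulLeft g)⁻¹) * (σ : Perm Γ)⁻¹ = τ at hconj
  rw [← mul_assoc, ← mul_assoc, mul_assoc _ _ (σ : Perm Γ)⁻¹, ← mul_inv_rev] at hconj
  exact mul_inv_eq_iff_eq_mul.mp hconj

theorem semidirect_injective_of_injOn_alt (Γ Λ : Type) [Group Γ] [Infinite Γ] [Group Λ]
    (f : (altGroup Γ ⋊[altAction Γ] Γ) →* Λ)
    (hinj : Function.Injective (f.comp SemidirectProduct.inl)) :
    (∀ (σ : altGroup Γ) (g : Γ), f ⟨σ, g⟩ = 1 → σ = 1 ∧ g = 1) ∧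
    Function.Injective f := by
  have trivial_kernel : ∀ (σ : altGroup Γ) (g : Γ), f ⟨σ, g⟩ = 1 → σ = 1 ∧ g = 1 := by
    intro σ g hfg
    have hL := mulLeft_eq_inv_of_forall_conj_altAction_eq
      (SemidirectProduct.conj_eq_self_of_map_eq_one f hinj hfg)
    have hg : g = 1 := eq_one_of_mulLeft_mem_altGroup (hL ▸ inv_mem σ.2)
    subst hg
    exact ⟨Subtype.ext (inv_eq_one.mp (hL.symm.trans Equiv.mulLeft_one)), rfl⟩
  refine ⟨trivial_kernel, (injective_iff_map_eq_one f).mpr fun ⟨σ, g⟩ hx => ?_⟩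
  obtain ⟨rfl, rfl⟩ := trivial_kernel σ g hx
  rfl
end

section
/- Let Γ be an infinite group and Alt(Γ) the group of even finitary permutations of Γ, with Γ acting by (g·σ)(x) = gσ(g⁻¹x). If σ ∈ Alt(Γ), g ∈ Γ, and φ : Alt(Γ) ⋊ Γ → Λ is a homomorphism injective on Alt(Γ) with φ(σ, g) = 1, then for every τ ∈ Alt(Γ) commuting with σ we have g·τ = τ. -/
open scoped Classical

theorem action_fixes_commuting_of_ker (Γ Λ : Type) [Group Γ] [Infinite Γ] [Group Λ]
    (f : (altGroup Γ ⋊[altAction Γ] Γ) →* Λ)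
    (hinj : Function.Injective (f.comp SemidirectProduct.inl))
    (σ : altGroup Γ) (g : Γ) (hfg : f ⟨σ, g⟩ = 1)
    (τ : altGroup Γ) (hcomm : τ * σ = σ * τ) :
    altAction Γ g τ = τ := by
  set u : altGroup Γ ⋊[altAction Γ] Γ := ⟨σ, g⟩ with hu
  have hconj : u * SemidirectProduct.inl τ * u⁻¹ =
      SemidirectProduct.inl (σ * altAction Γ g τ * σ⁻¹) := by
    ext <;> simp [hu, mul_assoc]
  have hf : f (SemidirectProduct.inl (σ * altAction Γ g τ * σ⁻¹)) =
      f (SemidirectProduct.inl τ) := by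
    rw [← hconj, map_mul, map_mul, hfg, map_inv, hfg]
    simp
  have := hinj hf
  have h2 : σ * altAction Γ g τ * σ⁻¹ = τ := this
  have h3 : altAction Γ g τ = σ⁻¹ * τ * σ := by
    have := congrArg (fun x => σ⁻¹ * x * σ) h2
    simpa [mul_assoc] using this
  rw [h3, mul_assoc, hcomm, ← mul_assoc]; simp
end

section
/- Let Γ be an infinite group and g ∈ Γ. If for every 3-cycle τ = (i,j,k) ∈ Alt(Γ) with i, j, k outside a fixed finite subset F of Γ we have g·τ = τ (where (g·τ)(x) = gτ(g⁻¹x)), then g = 1. -/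
open scoped Classical

/-!
A permutation commuting with the 3-cycle `(i j k)` maps `i` into its support `{i, j, k}`.
Choosing `j, k` outside `F ∪ {i, π i}` therefore shows that a permutation commuting with all
3-cycles outside `F` fixes every point outside `F`. Left translation by `g` fixing a point
means `g = 1`.
-/

namespace Equiv.Perm

variable {X : Type*}

theorem swap_mul_swap_apply_left {i j k : X} (hik : i ≠ k) (hjk : j ≠ k) :
    (swap i j * swap i k) i = k := by
  rw [mul_apply, swap_apply_left, swap_apply_of_ne_of_ne hik.symm hjk.symm]

theorem swap_mul_swap_apply_of_ne {i j k x : X} (hi : x ≠ i) (hj : x ≠ j) (hk : x ≠ k) :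
    (swap i j * swap i k) x = x := by
  rw [mul_apply, swap_apply_of_ne_of_ne hi hk, swap_apply_of_ne_of_ne hi hj]

theorem apply_mem_of_commute_swap_mul_swap {π : Perm X} {i j k : X} (hik : i ≠ k) (hjk : j ≠ k)
    (hπ : Commute π (swap i j * swap i k)) : π i = i ∨ π i = j ∨ π i = k := by
  by_contra! hout
  obtain ⟨hi, hj, hk⟩ := hout
  have hfix := swap_mul_swap_apply_of_ne hi hj hk
  rw [← mul_apply, ← hπ.eq, mul_apply, swap_mul_swap_apply_left hik hjk] at hfix
  exact hik (π.injective hfix).symm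

theorem apply_eq_self_of_forall_commute_swap_mul_swap [Infinite X] {π : Perm X} {F : Set X}
    (hF : F.Finite)
    (hπ : ∀ i j k : X, i ∉ F → j ∉ F → k ∉ F → i ≠ j → i ≠ k → j ≠ k →
      Commute π (swap i j * swap i k))
    {i : X} (hi : i ∉ F) : π i = i := by
  obtain ⟨j, hj⟩ := (hF.insert i |>.insert (π i)).exists_notMem
  obtain ⟨k, hk⟩ := (hF.insert i |>.insert (π i) |>.insert j).exists_notMem
  simp only [Set.mem_insert_iff, not_or] at hj hk
  obtain ⟨hjπ, hji, hjF⟩ := hj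
  obtain ⟨hkj, hkπ, hki, hkF⟩ := hk
  have hcomm := hπ i j k hi hjF hkF (Ne.symm hji) (Ne.symm hki) (Ne.symm hkj)
  rcases apply_mem_of_commute_swap_mul_swap (Ne.symm hki) (Ne.symm hkj) hcomm with h | h | h
  · exact h
  · exact absurd h.symm hjπ
  · exact absurd h.symm hkπ

end Equiv.Perm

theorem eq_one_of_fixes_three_cycles (Γ : Type) [Group Γ] [Infinite Γ]
    (g : Γ) (F : Set Γ) (hF : F.Finite)
    (h : ∀ i j k : Γ, i ∉ F → j ∉ F → k ∉ F → i ≠ j → i ≠ k → j ≠ k →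
      Equiv.mulLeft g * (Equiv.swap i j * Equiv.swap i k) * (Equiv.mulLeft g)⁻¹ =
        Equiv.swap i j * Equiv.swap i k) :
    g = 1 := by
  obtain ⟨i, hi⟩ := hF.exists_notMem
  have hgi : g * i = i :=
    Equiv.Perm.apply_eq_self_of_forall_commute_swap_mul_swap hF
      (fun a b c ha hb hc hab hac hbc => mul_inv_eq_iff_eq_mul.mp (h a b c ha hb hc hab hac hbc)) hi
  exact mul_eq_right.mp hgi
end
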